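/- arXiv:2011.08524 — 2 statements merged into one kernel-verified Lean document; each statement's English description precedes it below -/
import Mathlib

section
/- Let u = (u_j)_{j≥1} be a complex sequence with sup_j |u_j| ≤ 1, and for each m ≥ 1 set x_m = ∑_{j=1}^m (1 − 1/m) u_j e_j. Then x_m ∈ 𝔻_X for every m, and for every continuous linear functional x^* ∈ X^* with ∑_{j=1}^∞ |x^*(e_j)| < ∞ one has x^*(x_m) → ∑_{j=1}^∞ u_j x^*(e_j) as m → ∞. (Hence 𝔻_X is dense in the closed unit ball of (X^♯)^* for the topology σ((X^♯)^*, X^♯).) -/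
open Filter Topology

noncomputable section

structure SchauderBasisC (X : Type*) [NormedAddCommGroup X] [NormedSpace ℂ X] where
  e : ℕ → X
  coord : ℕ → X →L[ℂ] ℂ
  norm_e : ∀ j, ‖e j‖ = 1
  coord_e : ∀ i j, coord i (e j) = if i = j then 1 else 0
  coord_bdd : ∃ C : ℝ, ∀ j, ‖coord j‖ ≤ C
  expand : ∀ x : X,
    Tendsto (fun n => ∑ j ∈ Finset.range n, coord j x • e j) atTop (nhds x)

def polydisk {X : Type*} [NormedAddCommGroup X] [NormedSpace ℂ X]
    (B : SchauderBasisC X) (r : ℕ → ℝ) : Set X :=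
  {x | ∀ j, ‖B.coord j x‖ < r j}

/-! The coordinates of `x_m` are `(1 - 1/m) u_j` for `j < m` and `0` beyond, all of modulus
`≤ 1 - 1/m < 1`. For `x^*` with `∑ |x^*(e_j)| < ∞`, `x^*(x_m) = (1 - 1/m) ∑_{j<m} u_j x^*(e_j)`
is the product of a sequence tending to `1` with the partial sums of an absolutely convergent
series. -/

lemma SchauderBasisC.coord_sum_smul {X : Type*} [NormedAddCommGroup X] [NormedSpace ℂ X]
    (B : SchauderBasisC X) (c : ℕ → ℂ) (m i : ℕ) :
    B.coord i (∑ j ∈ Finset.range m, c j • B.e j) = if i < m then c i else 0 := by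
  simp [map_sum, B.coord_e, Finset.sum_ite_eq]

section RCLike

variable {𝕜 : Type*} [RCLike 𝕜]

lemma norm_one_sub_one_div_natCast {m : ℕ} (hm : 1 ≤ m) :
    ‖1 - 1 / (m : 𝕜)‖ = 1 - 1 / (m : ℝ) := by
  have hm' : 1 / (m : ℝ) ≤ 1 := div_le_one_of_le₀ (by exact_mod_cast hm) (by positivity)
  rw [show (1 - 1 / (m : 𝕜)) = ((1 - 1 / (m : ℝ) : ℝ) : 𝕜) by push_cast; rfl,
    RCLike.norm_ofReal, abs_of_nonneg (sub_nonneg.2 hm')]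

lemma norm_one_sub_one_div_natCast_mul_lt_one {m : ℕ} (hm : 1 ≤ m) {z : 𝕜} (hz : ‖z‖ ≤ 1) :
    ‖(1 - 1 / (m : 𝕜)) * z‖ < 1 := by
  have hpos : 0 < 1 / (m : ℝ) := by positivity
  calc ‖(1 - 1 / (m : 𝕜)) * z‖ = (1 - 1 / (m : ℝ)) * ‖z‖ := by
        rw [norm_mul, norm_one_sub_one_div_natCast hm]
    _ ≤ 1 - 1 / (m : ℝ) := by
        rw [← norm_one_sub_one_div_natCast (𝕜 := 𝕜) hm]
        exact mul_le_of_le_one_right (norm_nonneg _) hz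
    _ < 1 := by linarith

lemma tendsto_one_sub_one_div_natCast_mul_partialSum {a : ℕ → 𝕜} (ha : Summable a) :
    Tendsto (fun m : ℕ => (1 - 1 / (m : 𝕜)) * ∑ j ∈ Finset.range m, a j) atTop
      (𝓝 (∑' j, a j)) := by
  have hfactor : Tendsto (fun m : ℕ => 1 - 1 / (m : 𝕜)) atTop (𝓝 1) := by
    simpa using tendsto_const_nhds.sub (tendsto_one_div_atTop_nhds_zero_nat (𝕜 := 𝕜))
  simpa using hfactor.mul ha.hasSum.tendsto_sum_nat

end RCLike

theorem stmt7_general {X : Type*} [NormedAddCommGroup X] [NormedSpace ℂ X]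
    (B : SchauderBasisC X) (u : ℕ → ℂ) (hu : ∀ j, ‖u j‖ ≤ 1) :
    (∀ m : ℕ, 1 ≤ m →
      (∑ j ∈ Finset.range m, ((1 - 1 / (m : ℂ)) * u j) • B.e j) ∈ polydisk B (fun _ => 1)) ∧
    (∀ φ : X →L[ℂ] ℂ, Summable (fun j => ‖φ (B.e j)‖) →
      Tendsto (fun m : ℕ => φ (∑ j ∈ Finset.range m, ((1 - 1 / (m : ℂ)) * u j) • B.e j))
        atTop (nhds (∑' j, u j * φ (B.e j)))) := by
  refine ⟨fun m hm i => ?_, fun φ hφ => ?_⟩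
  · rw [B.coord_sum_smul]
    split_ifs
    · exact norm_one_sub_one_div_natCast_mul_lt_one hm (hu i)
    · simp
  · have hsum : Summable (fun j => u j * φ (B.e j)) :=
      hφ.of_norm_bounded fun j => by
        rw [norm_mul]
        exact mul_le_of_le_one_left (norm_nonneg _) (hu j)
    have hφ_xm : ∀ m : ℕ, φ (∑ j ∈ Finset.range m, ((1 - 1 / (m : ℂ)) * u j) • B.e j)
        = (1 - 1 / (m : ℂ)) * ∑ j ∈ Finset.range m, u j * φ (B.e j) := fun m => by
      simp only [map_sum, map_smul, smul_eq_mul, Finset.mul_sum, mul_assoc]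
    simpa only [hφ_xm] using tendsto_one_sub_one_div_natCast_mul_partialSum hsum

/-- for `u ∈ ℓ_∞` with `sup_j |u_j| ≤ 1` and
`x_m = ∑_{j=1}^m (1 − 1/m) u_j e_j`, every `x_m` (for `m ≥ 1`) lies in `𝔻_X`, and for every
`x^* ∈ X^*` with `∑_j |x^*(e_j)| < ∞` one has `x^*(x_m) → ∑_j u_j x^*(e_j)`. -/
theorem stmt7 {X : Type*} [NormedAddCommGroup X] [NormedSpace ℂ X] [CompleteSpace X]
    (B : SchauderBasisC X) (u : ℕ → ℂ) (hu : ∀ j, ‖u j‖ ≤ 1) :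
    (∀ m : ℕ, 1 ≤ m →
      (∑ j ∈ Finset.range m, ((1 - 1 / (m : ℂ)) * u j) • B.e j) ∈ polydisk B (fun _ => 1)) ∧
    (∀ φ : X →L[ℂ] ℂ, Summable (fun j => ‖φ (B.e j)‖) →
      Tendsto (fun m : ℕ => φ (∑ j ∈ Finset.range m, ((1 - 1 / (m : ℂ)) * u j) • B.e j))
        atTop (nhds (∑' j, u j * φ (B.e j)))) :=
  stmt7_general B u hu
end
end

section
/- For every 0 < ρ < 1 and every ε > 0 there exists a linear map T : ℓ₁ → H^∞(𝔻_X) such that ‖β‖_{ℓ₁} ≤ sup_{x ∈ 𝔻_X} |T(β)(x)| ≤ (1+ε)‖β‖_{ℓ₁} for every β ∈ ℓ₁, and for every β ∈ ℓ₁ with β ≠ 0 and every u ∈ ℓ_∞ with ‖u‖_∞ ≤ ρ, the cluster set Cl_{𝔻_X}(T(β), u) contains an open disk of positive radius in ℂ. (Thus E_{ρ 𝔻̄_X^σ}(𝔻_X) ∪ {0} contains an almost isometric copy of ℓ₁.) -/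
/-!
Take `T β = ∑ⱼ βⱼ Fⱼ` with `Fⱼ(x) = x_{2j} + (ε/2) (exp (-Sⱼ x) - exp (-1))`, where
`Sⱼ x = ∑ₙ 2⁻ⁿ⁻¹ cayley (x_{k(j,n)})`, `cayley w = (1 - w)/(1 + w)`, and `n ↦ k(j,n)` enumerates
the `j`-th of infinitely many disjoint blocks of odd indices. The Cayley map sends the unit disk
into the closed right half plane, so `‖exp (-Sⱼ x)‖ ≤ 1` and `‖Fⱼ‖ ≤ 1 + ε`. At points whose odd
coordinates vanish, `Sⱼ = ∑ₙ 2⁻ⁿ⁻¹ = 1`, so `T β x = ∑ⱼ βⱼ x_{2j}`, and aligning the phases of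
`x_{2j}` with those of `βⱼ` shows that the supremum of `‖T β‖` is at least `‖β‖₁`.

For the cluster sets, fix `βⱼ₀ ≠ 0`. The points that agree with `u` below `m`, carry at the
`m`-th index of block `j₀` the value `v` with `2⁻ᵐ⁻¹ cayley v = w`, and vanish elsewhere converge
to `u` weak-star, because that index escapes to infinity; along them `Sⱼ₀` converges to
`Sⱼ₀ u + w` and every other `Sⱼ` to `Sⱼ u`. Since `exp (-w)` sweeps the punctured unit disk as
`Re w > 0` varies, the limits of `T β` fill a punctured disk of radius `‖βⱼ₀ (ε/2) exp (-Sⱼ₀ u)‖`.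
-/

open Filter Topology Metric

noncomputable section

def clusterSetDX {X : Type*} [NormedAddCommGroup X] [NormedSpace ℂ X]
    (B : SchauderBasisC X) (g : X → ℂ) (u : ℕ → ℂ) : Set ℂ :=
  {lam | ∃ (ι : Type) (l : Filter ι) (x : ι → X), l.NeBot ∧
    (∀ i, x i ∈ polydisk B (fun _ => 1)) ∧
    (∀ a : lp (fun _ : ℕ => ℂ) 1,
      Tendsto (fun i => ∑' j, a j * B.coord j (x i)) l (nhds (∑' j, a j * u j))) ∧
    Tendsto (fun i => g (x i)) l (nhds lam)}

open Function

lemma hasFDerivAt_tsum_mul {𝕜 E : Type*} [RCLike 𝕜] [NormedAddCommGroup E] [NormedSpace 𝕜 E]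
    {U : Set E} (hU : IsOpen U) {a : ℕ → 𝕜} (ha : Summable fun n => ‖a n‖) {h : ℕ → E → 𝕜}
    {M : ℝ} (hd : ∀ n, DifferentiableOn 𝕜 (h n) U) (hb : ∀ n, ∀ y ∈ U, ‖fderiv 𝕜 (h n) y‖ ≤ M)
    (hsum : ∀ y ∈ U, Summable fun n => a n * h n y) {x : E} (hx : x ∈ U) :
    HasFDerivAt (fun y => ∑' n, a n * h n y) (∑' n, a n • fderiv 𝕜 (h n) x) x := by
  have hderiv : ∀ n, ∀ y ∈ U, HasFDerivAt (fun y => a n * h n y) (a n • fderiv 𝕜 (h n) y) y :=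
    fun n y hy => ((hd n).differentiableAt (hU.mem_nhds hy)).hasFDerivAt.const_mul (a n)
  refine hasFDerivAt_of_tendstoUniformlyOn hU (tendstoUniformlyOn_tsum (ha.mul_right M)
    fun n y hy => (norm_smul_le _ _).trans (mul_le_mul_of_nonneg_left (hb n y hy) (norm_nonneg _)))
    (fun t y hy => HasFDerivAt.fun_sum fun n _ => hderiv n y hy)
    (fun y hy => (hsum y hy).hasSum) hx

lemma norm_tsum_smul_le {𝕜 F : Type*} [RCLike 𝕜] [NormedAddCommGroup F] [NormedSpace 𝕜 F]
    {a : ℕ → 𝕜} (ha : Summable fun n => ‖a n‖) {f : ℕ → F} {M : ℝ} (hf : ∀ n, ‖f n‖ ≤ M) :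
    ‖∑' n, a n • f n‖ ≤ (∑' n, ‖a n‖) * M := by
  rw [← tsum_mul_right]
  exact tsum_of_norm_bounded (ha.mul_right M).hasSum fun n =>
    (norm_smul_le _ _).trans (mul_le_mul_of_nonneg_left (hf n) (norm_nonneg _))

lemma le_biSup_of_tendsto {α : Type*} {s : Set α} {f : α → ℝ} {C a : ℝ} (hC : ∀ x ∈ s, f x ≤ C)
    {xs : ℕ → α} (hxs : ∀ n, xs n ∈ s) (hlim : Tendsto (fun n => f (xs n)) atTop (𝓝 a)) :
    a ≤ ⨆ x ∈ s, f x := by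
  have hbdd : BddAbove (Set.range fun x => ⨆ _ : x ∈ s, f x) := by
    refine ⟨max C 0, Set.forall_mem_range.2 fun x => ?_⟩
    by_cases hx : x ∈ s
    · rw [ciSup_pos hx]; exact (hC x hx).trans (le_max_left _ _)
    · have : IsEmpty (x ∈ s) := ⟨hx⟩
      rw [Real.iSup_of_isEmpty]; exact le_max_right _ _
  exact le_of_tendsto' hlim fun n =>
    le_ciSup_of_le hbdd (xs n) (ciSup_pos (f := fun _ => f (xs n)) (hxs n)).ge

lemma exists_re_pos_exp_neg_eq {q : ℂ} (hq0 : q ≠ 0) (hq1 : ‖q‖ < 1) :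
    ∃ w : ℂ, 0 < w.re ∧ Complex.exp (-w) = q :=
  ⟨-Complex.log q, by
    rw [Complex.neg_re, Complex.log_re, neg_pos]
    exact Real.log_neg (norm_pos_iff.2 hq0) hq1, by rw [neg_neg, Complex.exp_log hq0]⟩

section LOne

lemma summable_norm_lp_one (β : lp (fun _ : ℕ => ℂ) 1) : Summable fun j => ‖β j‖ := by
  simpa using (memℓp_gen_iff (by norm_num : (0 : ℝ) < (1 : ENNReal).toReal)).1 (lp.memℓp β)

lemma norm_lp_one_eq_tsum (β : lp (fun _ : ℕ => ℂ) 1) : ‖β‖ = ∑' j, ‖β j‖ := by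
  simpa using lp.norm_eq_tsum_rpow (by norm_num : (0 : ℝ) < (1 : ENNReal).toReal) β

variable {c : ℕ → ℂ} {M : ℝ}

lemma summable_lp_one_mul (β : lp (fun _ : ℕ => ℂ) 1) (hc : ∀ j, ‖c j‖ ≤ M) :
    Summable fun j => β j * c j :=
  .of_norm_bounded ((summable_norm_lp_one β).mul_right M) fun j => by
    rw [norm_mul]; exact mul_le_mul_of_nonneg_left (hc j) (norm_nonneg _)

lemma norm_tsum_lp_one_mul_le (β : lp (fun _ : ℕ => ℂ) 1) (hc : ∀ j, ‖c j‖ ≤ M) :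
    ‖∑' j, β j * c j‖ ≤ M * ‖β‖ := by
  rw [norm_lp_one_eq_tsum, ← tsum_mul_left]
  refine tsum_of_norm_bounded ((summable_norm_lp_one β).mul_left M).hasSum fun j => ?_
  rw [norm_mul, mul_comm]
  exact mul_le_mul_of_nonneg_right (hc j) (norm_nonneg _)

lemma isLinearMap_tsum_lp_one_mul (hc : ∀ j, ‖c j‖ ≤ M) :
    IsLinearMap ℂ fun β : lp (fun _ : ℕ => ℂ) 1 => ∑' j, β j * c j where
  map_add β γ := by
    simp only [lp.coeFn_add, Pi.add_apply, add_mul]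
    exact (summable_lp_one_mul β hc).tsum_add (summable_lp_one_mul γ hc)
  map_smul a β := by
    simp only [lp.coeFn_smul, Pi.smul_apply, smul_eq_mul, mul_assoc]
    exact tsum_mul_left

end LOne

def cayley (w : ℂ) : ℂ := (1 - w) / (1 + w)

section Cayley

variable {w : ℂ} {r : ℝ}

lemma cayley_zero : cayley 0 = 1 := by simp [cayley]

lemma one_sub_le_norm_one_add (hw : ‖w‖ ≤ r) : 1 - r ≤ ‖1 + w‖ := by
  have := norm_sub_norm_le (1 : ℂ) (-w)
  rw [norm_one, norm_neg, sub_neg_eq_add] at this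
  linarith

lemma one_add_ne_zero_of_norm_lt_one (hw : ‖w‖ < 1) : 1 + w ≠ 0 :=
  norm_pos_iff.1 (by linarith [one_sub_le_norm_one_add le_rfl (w := w)])

lemma one_add_ne_zero_of_re_pos (hw : 0 < w.re) : 1 + w ≠ 0 := fun h => by
  have := congrArg Complex.re h
  simp only [Complex.add_re, Complex.one_re, Complex.zero_re] at this
  linarith

lemma cayley_cayley (hw : 1 + w ≠ 0) : cayley (cayley w) = w := by
  unfold cayley
  field_simp
  ring

lemma re_cayley_nonneg (hw : ‖w‖ < 1) : 0 ≤ (cayley w).re := by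
  have key : (cayley w).re = (1 - Complex.normSq w) / Complex.normSq (1 + w) := by
    rw [cayley, Complex.div_re, ← add_div]
    congr 1
    simp only [Complex.normSq_apply, Complex.sub_re, Complex.add_re, Complex.sub_im,
      Complex.add_im, Complex.one_re, Complex.one_im]
    ring
  rw [key, Complex.normSq_eq_norm_sq]
  exact div_nonneg (by nlinarith [norm_nonneg w]) (Complex.normSq_nonneg _)

lemma norm_cayley_lt_one (hw : 0 < w.re) : ‖cayley w‖ < 1 := by
  have hsq : Complex.normSq (1 - w) < Complex.normSq (1 + w) := by
    simp only [Complex.normSq_apply, Complex.sub_re, Complex.add_re, Complex.sub_im,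
      Complex.add_im, Complex.one_re, Complex.one_im]
    nlinarith
  rw [Complex.normSq_eq_norm_sq, Complex.normSq_eq_norm_sq] at hsq
  rw [cayley, norm_div, div_lt_one (norm_pos_iff.2 (one_add_ne_zero_of_re_pos hw))]
  exact lt_of_pow_lt_pow_left₀ 2 (norm_nonneg _) hsq

lemma norm_cayley_le (hw : ‖w‖ ≤ r) (hr : r < 1) : ‖cayley w‖ ≤ (1 + r) / (1 - r) := by
  rw [cayley, norm_div]
  have h0 : 0 ≤ r := (norm_nonneg w).trans hw
  refine div_le_div₀ (by linarith) ?_ (by linarith) (one_sub_le_norm_one_add hw)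
  exact (norm_sub_le _ _).trans (by rw [norm_one]; linarith)

lemma hasDerivAt_cayley (hw : 1 + w ≠ 0) : HasDerivAt cayley (-2 / (1 + w) ^ 2) w := by
  have := ((hasDerivAt_id w).const_sub 1).fun_div ((hasDerivAt_id w).const_add 1) hw
  exact this.congr_deriv (by simp only [id]; ring)

lemma norm_deriv_cayley_le (hw : ‖w‖ ≤ r) (hr : r < 1) :
    ‖(-2 / (1 + w) ^ 2 : ℂ)‖ ≤ 2 / (1 - r) ^ 2 := by
  rw [norm_div, norm_pow, norm_neg, Complex.norm_ofNat]
  have := one_sub_le_norm_one_add hw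
  gcongr

end Cayley

def weight (n : ℕ) : ℝ := 1 / 2 / 2 ^ n

lemma weight_pos (n : ℕ) : 0 < weight n := by unfold weight; positivity

lemma summable_weight : Summable weight :=
  (summable_geometric_two.mul_left (1 / 2)).congr fun n => by rw [weight, one_div_pow]; ring

lemma tsum_weight : ∑' n, (weight n : ℂ) = 1 := by
  have : ∑' n, weight n = 1 := tsum_geometric_two' 1
  rw [← Complex.ofReal_tsum, this, Complex.ofReal_one]

lemma norm_weight (n : ℕ) : ‖(weight n : ℂ)‖ = weight n := by
  rw [Complex.norm_real, Real.norm_of_nonneg (weight_pos n).le]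

lemma norm_weight_mul (n : ℕ) (z : ℂ) : ‖(weight n : ℂ) * z‖ = weight n * ‖z‖ := by
  rw [norm_mul, norm_weight]

lemma summable_norm_weight : Summable fun n => ‖(weight n : ℂ)‖ := by
  simpa only [norm_weight] using summable_weight

lemma tsum_norm_weight : ∑' n, ‖(weight n : ℂ)‖ = 1 := by
  simp only [norm_weight]; exact tsum_geometric_two' 1

def blockIndex (j n : ℕ) : ℕ := 2 * Nat.pair j n + 1

lemma le_blockIndex (j n : ℕ) : n ≤ blockIndex j n := by
  have := Nat.right_le_pair j n
  unfold blockIndex; omega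

lemma blockIndex_inj {j n j' n' : ℕ} : blockIndex j n = blockIndex j' n' ↔ j = j' ∧ n = n' := by
  rw [← Nat.pair_eq_pair, blockIndex, blockIndex]
  omega

def blockSeries (z : ℕ → ℂ) (j : ℕ) : ℂ := ∑' n, (weight n : ℂ) * cayley (z (blockIndex j n))

def perturbedCoord (ε : ℝ) (z : ℕ → ℂ) (j : ℕ) : ℂ :=
  z (2 * j) + (ε / 2 : ℝ) * (Complex.exp (-blockSeries z j) - Complex.exp (-1))

def seqEmbedding (ε : ℝ) (β : lp (fun _ : ℕ => ℂ) 1) (z : ℕ → ℂ) : ℂ :=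
  ∑' j, β j * perturbedCoord ε z j

section Sequences

variable {z : ℕ → ℂ} {r ε : ℝ}

lemma norm_blockSeries_term_le (hz : ∀ k, ‖z k‖ ≤ r) (hr : r < 1) (j n : ℕ) :
    ‖(weight n : ℂ) * cayley (z (blockIndex j n))‖ ≤ weight n * ((1 + r) / (1 - r)) := by
  rw [norm_weight_mul]
  exact mul_le_mul_of_nonneg_left (norm_cayley_le (hz _) hr) (weight_pos n).le

lemma summable_blockSeries (hz : ∀ k, ‖z k‖ ≤ r) (hr : r < 1) (j : ℕ) :
    Summable fun n => (weight n : ℂ) * cayley (z (blockIndex j n)) :=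
  .of_norm_bounded (summable_weight.mul_right _) (norm_blockSeries_term_le hz hr j)

lemma re_blockSeries_nonneg (hz : ∀ k, ‖z k‖ < 1) (j : ℕ) : 0 ≤ (blockSeries z j).re := by
  unfold blockSeries
  by_cases hs : Summable fun n => (weight n : ℂ) * cayley (z (blockIndex j n))
  · rw [Complex.re_tsum hs]
    exact tsum_nonneg fun n => by
      rw [Complex.re_ofReal_mul]
      exact mul_nonneg (weight_pos n).le (re_cayley_nonneg (hz _))
  · rw [tsum_eq_zero_of_not_summable hs, Complex.zero_re]

lemma norm_perturbedCoord_le (hε : 0 ≤ ε) (hz : ∀ k, ‖z k‖ < 1) (j : ℕ) :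
    ‖perturbedCoord ε z j‖ ≤ 1 + ε := by
  have hexp : ‖Complex.exp (-blockSeries z j)‖ ≤ 1 := by
    rw [Complex.norm_exp, Complex.neg_re, Real.exp_le_one_iff, neg_nonpos]
    exact re_blockSeries_nonneg hz j
  have hexp1 : ‖Complex.exp (-1)‖ ≤ 1 := by
    rw [Complex.norm_exp, Real.exp_le_one_iff]; norm_num
  calc ‖perturbedCoord ε z j‖
      ≤ ‖z (2 * j)‖ + ε / 2 * (‖Complex.exp (-blockSeries z j)‖ + ‖Complex.exp (-1)‖) := by
        refine (norm_add_le _ _).trans (add_le_add le_rfl ?_)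
        rw [norm_mul, Complex.norm_real, Real.norm_of_nonneg (by linarith)]
        exact mul_le_mul_of_nonneg_left (norm_sub_le _ _) (by linarith)
    _ ≤ 1 + ε / 2 * (1 + 1) := by gcongr; exact (hz _).le
    _ = 1 + ε := by ring

lemma norm_seqEmbedding_le (hε : 0 ≤ ε) (hz : ∀ k, ‖z k‖ < 1) (β : lp (fun _ : ℕ => ℂ) 1) :
    ‖seqEmbedding ε β z‖ ≤ (1 + ε) * ‖β‖ :=
  norm_tsum_lp_one_mul_le β (norm_perturbedCoord_le hε hz)

lemma perturbedCoord_of_blocks_eq_zero (hz : ∀ j n, z (blockIndex j n) = 0) (j : ℕ) :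
    perturbedCoord ε z j = z (2 * j) := by
  have : blockSeries z j = 1 := by
    simp only [blockSeries, hz, cayley_zero, mul_one, tsum_weight]
  simp [perturbedCoord, this]

lemma blockSeries_update (hz : ∀ k, ‖z k‖ ≤ r) (hr : r < 1) (j₀ m : ℕ) (c : ℂ) (j : ℕ) :
    blockSeries (update z (blockIndex j₀ m) c) j = blockSeries z j +
      if j = j₀ then weight m * (cayley c - cayley (z (blockIndex j₀ m))) else 0 := by
  unfold blockSeries
  split_ifs with hj
  · subst hj
    have hterms : (fun n => (weight n : ℂ) * cayley (update z (blockIndex j m) c (blockIndex j n)))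
        = update (fun n => (weight n : ℂ) * cayley (z (blockIndex j n))) m
            (weight m * cayley c) := by
      ext n
      rcases eq_or_ne n m with rfl | hn
      · simp
      · simp [update_of_ne (mt blockIndex_inj.1 (fun h => hn h.2)), hn]
    rw [hterms, ((summable_blockSeries hz hr j).hasSum.update m _).tsum_eq]
    ring
  · rw [add_zero]
    congr! 4 with n
    exact update_of_ne (mt blockIndex_inj.1 (fun h => hj h.1)) _ _

lemma tendsto_blockSeries {ι : Type*} {l : Filter ι} {zs : ι → ℕ → ℂ}
    (hzs : ∀ i k, ‖zs i k‖ ≤ r) (hr : r < 1) (hlim : ∀ k, Tendsto (zs · k) l (𝓝 (z k)))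
    (j : ℕ) : Tendsto (fun i => blockSeries (zs i) j) l (𝓝 (blockSeries z j)) := by
  rcases l.eq_or_neBot with rfl | _
  · exact tendsto_bot
  have hz : ∀ k, ‖z k‖ ≤ r := fun k => le_of_tendsto' (hlim k).norm (hzs · k)
  refine tendsto_tsum_of_dominated_convergence (summable_weight.mul_right ((1 + r) / (1 - r)))
    (fun n => ?_) (.of_forall fun i => norm_blockSeries_term_le (hzs i) hr j)
  have hcont : ContinuousAt cayley (z (blockIndex j n)) :=
    (hasDerivAt_cayley (one_add_ne_zero_of_norm_lt_one ((hz _).trans_lt hr))).continuousAt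
  exact ((hcont.tendsto.comp (hlim _))).const_mul _

end Sequences

def spike (u : ℕ → ℂ) (j₀ m : ℕ) (c : ℂ) : ℕ → ℂ :=
  update (fun k => if k < m then u k else 0) (blockIndex j₀ m) c

section Spike

variable {u : ℕ → ℂ} {ρ ε : ℝ} {w : ℂ}

lemma norm_spike_lt_one (hu : ∀ k, ‖u k‖ ≤ ρ) (hρ : ρ < 1) {c : ℂ} (hc : ‖c‖ < 1)
    (j₀ m k : ℕ) : ‖spike u j₀ m c k‖ < 1 := by
  unfold spike
  rcases eq_or_ne k (blockIndex j₀ m) with rfl | hk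
  · simpa using hc
  · rw [update_of_ne hk]
    split_ifs
    exacts [(hu k).trans_lt hρ, by simp]

lemma spike_eq_zero {j₀ m k : ℕ} (hk : blockIndex j₀ m < k) (c : ℂ) : spike u j₀ m c k = 0 := by
  have := le_blockIndex j₀ m
  rw [spike, update_of_ne hk.ne', if_neg (by omega)]

lemma tendsto_spike (j₀ : ℕ) (c : ℕ → ℂ) (k : ℕ) :
    Tendsto (fun m => spike u j₀ m (c m) k) atTop (𝓝 (u k)) := by
  refine tendsto_const_nhds.congr' ?_
  filter_upwards [eventually_gt_atTop k] with m hm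
  have := le_blockIndex j₀ m
  rw [spike, update_of_ne (by omega), if_pos hm]

lemma tendsto_blockSeries_spike (hu : ∀ k, ‖u k‖ ≤ ρ) (hρ : ρ < 1) (hw : 0 < w.re)
    (j₀ j : ℕ) :
    Tendsto (fun m => blockSeries (spike u j₀ m (cayley (w / weight m))) j) atTop
      (𝓝 (blockSeries u j + if j = j₀ then w else 0)) := by
  have hρ0 : 0 ≤ ρ := (norm_nonneg _).trans (hu 0)
  have htrunc : ∀ m k, ‖if k < m then u k else 0‖ ≤ ρ := fun m k => by
    split_ifs
    exacts [hu k, by simpa using hρ0]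
  have hspike : ∀ m, blockSeries (spike u j₀ m (cayley (w / weight m))) j =
      blockSeries (fun k => if k < m then u k else 0) j +
        if j = j₀ then w - weight m else 0 := fun m => by
    have hre : 0 < (w / weight m).re := by
      rw [Complex.div_ofReal_re]; exact div_pos hw (weight_pos m)
    rw [spike, blockSeries_update (htrunc m) hρ,
      if_neg (not_lt.2 (le_blockIndex j₀ m)), cayley_cayley (one_add_ne_zero_of_re_pos hre),
      cayley_zero, mul_sub, mul_div_cancel₀ _ (Complex.ofReal_ne_zero.2 (weight_pos m).ne'),
      mul_one]
  simp_rw [hspike]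
  refine (tendsto_blockSeries htrunc hρ (fun k => ?_) j).add ?_
  · exact tendsto_const_nhds.congr' ((eventually_gt_atTop k).mono fun m hm => (if_pos hm).symm)
  split_ifs
  · simpa using tendsto_const_nhds.sub
      (Complex.continuous_ofReal.tendsto 0 |>.comp summable_weight.tendsto_atTop_zero)
  · exact tendsto_const_nhds

lemma tendsto_perturbedCoord_spike (hu : ∀ k, ‖u k‖ ≤ ρ) (hρ : ρ < 1) (hw : 0 < w.re)
    (ε : ℝ) (j₀ j : ℕ) :
    Tendsto (fun m => perturbedCoord ε (spike u j₀ m (cayley (w / weight m))) j) atTop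
      (𝓝 (perturbedCoord ε u j + if j = j₀ then
        (ε / 2 : ℝ) * Complex.exp (-blockSeries u j₀) * (Complex.exp (-w) - 1) else 0)) := by
  have hlim : perturbedCoord ε u j + (if j = j₀ then
      (ε / 2 : ℝ) * Complex.exp (-blockSeries u j₀) * (Complex.exp (-w) - 1) else 0) =
      u (2 * j) + (ε / 2 : ℝ) *
        (Complex.exp (-(blockSeries u j + if j = j₀ then w else 0)) - Complex.exp (-1)) := by
    unfold perturbedCoord
    split_ifs with hj
    · subst hj
      rw [neg_add, Complex.exp_add]
      ring
    · rw [add_zero, add_zero]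
  rw [hlim]
  exact (tendsto_spike j₀ _ (2 * j)).add (((tendsto_blockSeries_spike hu hρ hw j₀ j).neg.cexp
    |>.sub_const _).const_mul _)

lemma tendsto_seqEmbedding_spike (hε : 0 ≤ ε) (hu : ∀ k, ‖u k‖ ≤ ρ) (hρ : ρ < 1)
    (hw : 0 < w.re) (β : lp (fun _ : ℕ => ℂ) 1) (j₀ : ℕ) :
    Tendsto (fun m => seqEmbedding ε β (spike u j₀ m (cayley (w / weight m)))) atTop
      (𝓝 (seqEmbedding ε β u +
        β j₀ * ((ε / 2 : ℝ) * Complex.exp (-blockSeries u j₀)) * (Complex.exp (-w) - 1))) := by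
  have hspike : ∀ m k, ‖spike u j₀ m (cayley (w / weight m)) k‖ < 1 := fun m =>
    norm_spike_lt_one hu hρ (norm_cayley_lt_one (by
      rw [Complex.div_ofReal_re]; exact div_pos hw (weight_pos m))) j₀ m
  have hlim := tendsto_tsum_of_dominated_convergence
    ((summable_norm_lp_one β).mul_right (1 + ε))
    (fun j => (tendsto_perturbedCoord_spike hu hρ hw ε j₀ j).const_mul (β j))
    (.of_forall fun m j => by
      rw [norm_mul]
      exact mul_le_mul_of_nonneg_left (norm_perturbedCoord_le hε (hspike m) j) (norm_nonneg _))
  convert hlim using 2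
  · rfl
  simp_rw [mul_add, mul_ite, mul_zero]
  rw [(summable_lp_one_mul β (norm_perturbedCoord_le hε fun k => (hu k).trans_lt hρ)).tsum_add
    (summable_of_ne_finset_zero (s := {j₀}) fun j hj => if_neg (by simpa using hj)),
    tsum_eq_single j₀ fun j hj => if_neg hj, if_pos rfl, seqEmbedding]
  simp only [mul_assoc]

end Spike

def alignedSeq (β : lp (fun _ : ℕ => ℂ) 1) (N : ℕ) : ℕ → ℂ := fun k =>
  if k % 2 = 0 ∧ k < 2 * N then
    ((N / (N + 1) : ℝ) : ℂ) * Complex.exp (-((β (k / 2)).arg : ℂ) * Complex.I)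
  else 0

section Aligned

variable (β : lp (fun _ : ℕ => ℂ) 1) (N : ℕ)

lemma norm_alignedSeq_lt_one (k : ℕ) : ‖alignedSeq β N k‖ < 1 := by
  unfold alignedSeq
  split_ifs
  · rw [norm_mul, ← Complex.ofReal_neg, Complex.norm_exp_ofReal_mul_I, mul_one,
      Complex.norm_real, Real.norm_of_nonneg (by positivity), div_lt_one (by positivity)]
    linarith
  · simp

lemma alignedSeq_eq_zero {k : ℕ} (hk : 2 * N ≤ k) : alignedSeq β N k = 0 :=
  if_neg fun h => by omega

lemma seqEmbedding_alignedSeq (ε : ℝ) :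
    seqEmbedding ε β (alignedSeq β N) = ((N / (N + 1) * ∑ j ∈ Finset.range N, ‖β j‖ : ℝ) : ℂ) := by
  have hblocks : ∀ j n, alignedSeq β N (blockIndex j n) = 0 := fun j n =>
    if_neg fun h => by unfold blockIndex at h; omega
  have heven : ∀ j, alignedSeq β N (2 * j) =
      if j < N then ((N / (N + 1) : ℝ) : ℂ) * Complex.exp (-((β j).arg : ℂ) * Complex.I)
      else 0 := fun j => by
    simp only [alignedSeq, Nat.mul_mod_right, Nat.mul_div_cancel_left j two_pos, true_and,
      Nat.mul_lt_mul_left two_pos]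
  simp only [seqEmbedding, perturbedCoord_of_blocks_eq_zero hblocks, heven, mul_ite, mul_zero]
  rw [tsum_eq_sum (s := Finset.range N) fun j hj => if_neg (by simpa using hj),
    Finset.sum_congr rfl fun j hj => if_pos (Finset.mem_range.1 hj)]
  push_cast
  rw [Finset.mul_sum]
  refine Finset.sum_congr rfl fun j _ => ?_
  conv_lhs => rw [← Complex.norm_mul_exp_arg_mul_I (β j)]
  rw [mul_left_comm, mul_assoc, ← Complex.exp_add]
  simp

lemma tendsto_seqEmbedding_alignedSeq (ε : ℝ) :
    Tendsto (fun N => ‖seqEmbedding ε β (alignedSeq β N)‖) atTop (𝓝 ‖β‖) := by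
  simp_rw [seqEmbedding_alignedSeq, Complex.norm_real, Real.norm_eq_abs]
  have := (tendsto_natCast_div_add_atTop (1 : ℝ)).mul
    (norm_lp_one_eq_tsum β ▸ (summable_norm_lp_one β).hasSum.tendsto_sum_nat)
  rw [one_mul] at this
  simpa [abs_of_nonneg (norm_nonneg β)] using this.abs

end Aligned

namespace SchauderBasisC

variable {X : Type*} [NormedAddCommGroup X] [NormedSpace ℂ X] (B : SchauderBasisC X)

def coords (x : X) : ℕ → ℂ := fun k => B.coord k x

lemma coords_sum_range_smul {z : ℕ → ℂ} {n : ℕ} (hz : ∀ k, n ≤ k → z k = 0) :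
    B.coords (∑ i ∈ Finset.range n, z i • B.e i) = z := by
  ext k
  simp only [coords, map_sum, map_smul, B.coord_e, smul_eq_mul, mul_ite, mul_one, mul_zero,
    Finset.sum_ite_eq, Finset.mem_range]
  split_ifs with hk
  · rfl
  · exact (hz k (not_lt.1 hk)).symm

lemma tendsto_coords (x : X) : Tendsto (B.coords x) atTop (𝓝 0) := by
  have h := ((B.expand x).comp (tendsto_add_atTop_nat 1)).sub (B.expand x)
  simp only [Function.comp_def, Finset.sum_range_succ, add_sub_cancel_left, sub_self] at h
  refine tendsto_zero_iff_norm_tendsto_zero.2 ?_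
  simpa [coords, norm_smul, B.norm_e] using tendsto_zero_iff_norm_tendsto_zero.1 h

lemma exists_norm_coords_le {x : X} (hx : x ∈ polydisk B fun _ => 1) :
    ∃ r < 1, ∀ k, ‖B.coords x k‖ ≤ r := by
  obtain ⟨K, hK⟩ := eventually_atTop.1 ((B.tendsto_coords x).norm.eventually
    (eventually_le_nhds (by norm_num : ‖(0 : ℂ)‖ < 1 / 2)))
  obtain ⟨k₀, -, hk₀⟩ :=
    (Finset.range (K + 1)).exists_max_image (‖B.coords x ·‖) Finset.nonempty_range_add_one
  refine ⟨max (1 / 2) ‖B.coords x k₀‖, max_lt (by norm_num) (hx k₀), fun k => ?_⟩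
  rcases le_or_gt K k with hk | hk
  · exact (hK k hk).trans (le_max_left _ _)
  · exact (hk₀ k (Finset.mem_range.2 (by omega))).trans (le_max_right _ _)

lemma exists_ball_norm_coords_le {x : X} (hx : x ∈ polydisk B fun _ => 1) :
    ∃ r < 1, ∃ δ > 0, ∀ y ∈ ball x δ, ∀ k, ‖B.coords y k‖ ≤ r := by
  obtain ⟨r, hr, hxr⟩ := B.exists_norm_coords_le hx
  obtain ⟨C, hC⟩ := B.coord_bdd
  have hC1 : 0 < max C 1 := lt_max_of_lt_right one_pos
  refine ⟨(1 + r) / 2, by linarith, (1 - r) / (2 * max C 1), by field_simp; linarith,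
    fun y hy k => ?_⟩
  have hdist : max C 1 * ‖y - x‖ ≤ (1 - r) / 2 := by
    rw [mem_ball, dist_eq_norm] at hy
    have := mul_lt_mul_of_pos_left hy hC1
    rw [mul_div_assoc', mul_comm 2, ← div_div, mul_div_cancel_left₀ _ hC1.ne'] at this
    exact this.le
  have hy' : B.coords y k = B.coords x k + B.coord k (y - x) := by simp [coords]
  calc ‖B.coords y k‖ ≤ r + max C 1 * ‖y - x‖ := by
        rw [hy']
        exact (norm_add_le _ _).trans (add_le_add (hxr k)
          ((B.coord k).le_of_opNorm_le ((hC k).trans (le_max_left _ _)) _))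
    _ ≤ (1 + r) / 2 := by linarith

end SchauderBasisC

section Holomorphy

variable {X : Type*} [NormedAddCommGroup X] [NormedSpace ℂ X] {U : Set X} {r C ε : ℝ} {x : X}

lemma hasFDerivAt_cayley_comp (φ : X →L[ℂ] ℂ) (hx : ‖φ x‖ < 1) :
    HasFDerivAt (fun y => cayley (φ y)) ((-2 / (1 + φ x) ^ 2) • φ) x :=
  (hasDerivAt_cayley (one_add_ne_zero_of_norm_lt_one hx)).comp_hasFDerivAt x φ.hasFDerivAt

lemma norm_fderiv_cayley_comp_le {φ : X →L[ℂ] ℂ} (hφ : ‖φ‖ ≤ C) (hx : ‖φ x‖ ≤ r) (hr : r < 1) :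
    ‖fderiv ℂ (fun y => cayley (φ y)) x‖ ≤ 2 / (1 - r) ^ 2 * C := by
  rw [(hasFDerivAt_cayley_comp φ (hx.trans_lt hr)).fderiv, norm_smul]
  exact mul_le_mul (norm_deriv_cayley_le hx hr) hφ (norm_nonneg _) (by positivity)

namespace SchauderBasisC

variable (B : SchauderBasisC X)

lemma hasFDerivAt_blockSeries_coords (hU : IsOpen U) (hr : r < 1)
    (hUr : ∀ y ∈ U, ∀ k, ‖B.coords y k‖ ≤ r) (hC : ∀ k, ‖B.coord k‖ ≤ C) (j : ℕ) (hx : x ∈ U) :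
    HasFDerivAt (fun y => blockSeries (B.coords y) j)
      (∑' n, (weight n : ℂ) • fderiv ℂ (fun y => cayley (B.coord (blockIndex j n) y)) x) x :=
  hasFDerivAt_tsum_mul hU summable_norm_weight
    (fun _ y hy => (hasFDerivAt_cayley_comp _ ((hUr y hy _).trans_lt hr)).differentiableAt
      |>.differentiableWithinAt)
    (fun _ y hy => norm_fderiv_cayley_comp_le (hC _) (hUr y hy _) hr)
    (fun y hy => summable_blockSeries (hUr y hy) hr j) hx

lemma norm_fderiv_blockSeries_coords_le (hU : IsOpen U) (hr : r < 1)
    (hUr : ∀ y ∈ U, ∀ k, ‖B.coords y k‖ ≤ r) (hC : ∀ k, ‖B.coord k‖ ≤ C) (j : ℕ) (hx : x ∈ U) :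
    ‖fderiv ℂ (fun y => blockSeries (B.coords y) j) x‖ ≤ 2 / (1 - r) ^ 2 * C := by
  rw [(B.hasFDerivAt_blockSeries_coords hU hr hUr hC j hx).fderiv]
  simpa only [tsum_norm_weight, one_mul] using norm_tsum_smul_le summable_norm_weight
    fun n => norm_fderiv_cayley_comp_le (hC (blockIndex j n)) (hUr x hx _) hr

lemma hasFDerivAt_perturbedCoord_coords (hU : IsOpen U) (hr : r < 1)
    (hUr : ∀ y ∈ U, ∀ k, ‖B.coords y k‖ ≤ r) (hC : ∀ k, ‖B.coord k‖ ≤ C) (ε : ℝ) (j : ℕ)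
    (hx : x ∈ U) :
    HasFDerivAt (fun y => perturbedCoord ε (B.coords y) j)
      (B.coord (2 * j) + ((ε / 2 : ℝ) : ℂ) • (Complex.exp (-blockSeries (B.coords x) j) •
        -fderiv ℂ (fun y => blockSeries (B.coords y) j) x)) x :=
  (B.coord (2 * j)).hasFDerivAt.add
    (((B.hasFDerivAt_blockSeries_coords hU hr hUr hC j hx).differentiableAt.hasFDerivAt.neg.cexp
      |>.sub_const _).const_mul _)

lemma norm_fderiv_perturbedCoord_coords_le (hU : IsOpen U) (hr : r < 1)
    (hUr : ∀ y ∈ U, ∀ k, ‖B.coords y k‖ ≤ r) (hC : ∀ k, ‖B.coord k‖ ≤ C) (hε : 0 ≤ ε) (j : ℕ)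
    (hx : x ∈ U) :
    ‖fderiv ℂ (fun y => perturbedCoord ε (B.coords y) j) x‖ ≤
      C + ε / 2 * (2 / (1 - r) ^ 2 * C) := by
  rw [(B.hasFDerivAt_perturbedCoord_coords hU hr hUr hC ε j hx).fderiv]
  have hexp : ‖Complex.exp (-blockSeries (B.coords x) j)‖ ≤ 1 := by
    rw [Complex.norm_exp, Complex.neg_re, Real.exp_le_one_iff, neg_nonpos]
    exact re_blockSeries_nonneg (fun k => (hUr x hx k).trans_lt hr) j
  refine (norm_add_le _ _).trans (add_le_add (hC _) ?_)
  rw [norm_smul, norm_smul, norm_neg, Complex.norm_real, Real.norm_of_nonneg (by linarith)]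
  refine mul_le_mul_of_nonneg_left ?_ (by linarith)
  simpa only [one_mul] using mul_le_mul hexp (B.norm_fderiv_blockSeries_coords_le hU hr hUr hC j hx)
    (norm_nonneg _) zero_le_one

end SchauderBasisC

end Holomorphy

namespace SchauderBasisC

variable {X : Type*} [NormedAddCommGroup X] [NormedSpace ℂ X] (B : SchauderBasisC X) {ε : ℝ}

-- Off the polydisk the series need not converge; the value `0` there keeps `T` linear.
def polydiskEmbedding (ε : ℝ) (β : lp (fun _ : ℕ => ℂ) 1) : X → ℂ :=
  (polydisk B fun _ => 1).indicator fun x => seqEmbedding ε β (B.coords x)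

lemma polydiskEmbedding_of_mem (β : lp (fun _ : ℕ => ℂ) 1) {x : X}
    (hx : x ∈ polydisk B fun _ => 1) :
    B.polydiskEmbedding ε β x = seqEmbedding ε β (B.coords x) :=
  Set.indicator_of_mem hx _

lemma isLinearMap_polydiskEmbedding (hε : 0 ≤ ε) : IsLinearMap ℂ (B.polydiskEmbedding ε) := by
  have hlin : ∀ x ∈ polydisk B (fun _ => 1),
      IsLinearMap ℂ fun β => B.polydiskEmbedding ε β x := fun x hx => by
    simp only [B.polydiskEmbedding_of_mem _ hx]
    exact isLinearMap_tsum_lp_one_mul (norm_perturbedCoord_le hε hx)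
  constructor
  · intro β γ
    ext x
    by_cases hx : x ∈ polydisk B fun _ => 1
    · exact (hlin x hx).map_add β γ
    · simp [polydiskEmbedding, hx]
  · intro a β
    ext x
    by_cases hx : x ∈ polydisk B fun _ => 1
    · exact (hlin x hx).map_smul a β
    · simp [polydiskEmbedding, hx]

lemma norm_polydiskEmbedding_le (hε : 0 ≤ ε) (β : lp (fun _ : ℕ => ℂ) 1) {x : X}
    (hx : x ∈ polydisk B fun _ => 1) : ‖B.polydiskEmbedding ε β x‖ ≤ (1 + ε) * ‖β‖ := by
  rw [B.polydiskEmbedding_of_mem β hx]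
  exact norm_seqEmbedding_le hε hx β

lemma norm_le_iSup_polydiskEmbedding (hε : 0 ≤ ε) (β : lp (fun _ : ℕ => ℂ) 1) :
    ‖β‖ ≤ ⨆ x ∈ polydisk B (fun _ => 1), ‖B.polydiskEmbedding ε β x‖ := by
  set xs : ℕ → X := fun N => ∑ k ∈ Finset.range (2 * N), alignedSeq β N k • B.e k
  have hcoords : ∀ N, B.coords (xs N) = alignedSeq β N := fun N =>
    B.coords_sum_range_smul fun _ => alignedSeq_eq_zero β N
  have hxs : ∀ N, xs N ∈ polydisk B fun _ => 1 := fun N =>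
    show ∀ k, ‖B.coords (xs N) k‖ < 1 by rw [hcoords]; exact norm_alignedSeq_lt_one β N
  refine le_biSup_of_tendsto (fun x hx => B.norm_polydiskEmbedding_le hε β hx) hxs ?_
  simpa only [B.polydiskEmbedding_of_mem β (hxs _), hcoords] using
    tendsto_seqEmbedding_alignedSeq β ε

lemma differentiableOn_polydiskEmbedding (hε : 0 ≤ ε) (β : lp (fun _ : ℕ => ℂ) 1) :
    DifferentiableOn ℂ (B.polydiskEmbedding ε β) (polydisk B fun _ => 1) := by
  intro x hx
  obtain ⟨r, hr, δ, hδ, hball⟩ := B.exists_ball_norm_coords_le hx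
  obtain ⟨C, hC⟩ := B.coord_bdd
  have hsub : ball x δ ⊆ polydisk B fun _ => 1 := fun y hy k => (hball y hy k).trans_lt hr
  have hderiv := hasFDerivAt_tsum_mul isOpen_ball (summable_norm_lp_one β)
    (fun j y hy => (B.hasFDerivAt_perturbedCoord_coords isOpen_ball hr hball hC ε j hy)
      |>.differentiableAt.differentiableWithinAt)
    (fun j y hy => B.norm_fderiv_perturbedCoord_coords_le isOpen_ball hr hball hC hε j hy)
    (fun y hy => summable_lp_one_mul β (norm_perturbedCoord_le hε (hsub hy)))
    (mem_ball_self hδ)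
  refine (hderiv.congr_of_eventuallyEq ?_).differentiableAt.differentiableWithinAt
  filter_upwards [ball_mem_nhds x hδ] with y hy
  exact B.polydiskEmbedding_of_mem β (hsub hy)

lemma mem_clusterSetDX_polydiskEmbedding (hε : 0 ≤ ε) {u : ℕ → ℂ} {ρ : ℝ}
    (hu : ∀ k, ‖u k‖ ≤ ρ) (hρ : ρ < 1) {w : ℂ} (hw : 0 < w.re) (β : lp (fun _ : ℕ => ℂ) 1)
    (j₀ : ℕ) :
    seqEmbedding ε β u +
        β j₀ * ((ε / 2 : ℝ) * Complex.exp (-blockSeries u j₀)) * (Complex.exp (-w) - 1) ∈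
      clusterSetDX B (B.polydiskEmbedding ε β) u := by
  set zs : ℕ → ℕ → ℂ := fun m => spike u j₀ m (cayley (w / weight m))
  have hzs : ∀ m k, ‖zs m k‖ < 1 := fun m =>
    norm_spike_lt_one hu hρ (norm_cayley_lt_one (by
      rw [Complex.div_ofReal_re]; exact div_pos hw (weight_pos m))) j₀ m
  set xs : ℕ → X := fun m => ∑ k ∈ Finset.range (blockIndex j₀ m + 1), zs m k • B.e k
  have hcoords : ∀ m, B.coords (xs m) = zs m := fun m =>
    B.coords_sum_range_smul fun _ hk => spike_eq_zero hk _
  have hxs : ∀ m, xs m ∈ polydisk B fun _ => 1 := fun m =>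
    show ∀ k, ‖B.coords (xs m) k‖ < 1 by rw [hcoords]; exact hzs m
  refine ⟨ℕ, atTop, xs, inferInstance, hxs, fun a => ?_, ?_⟩
  · have hpair : ∀ m, (fun k => a k * B.coord k (xs m)) = fun k => a k * zs m k := fun m => by
      ext k; rw [← hcoords m]; rfl
    simp only [hpair]
    refine tendsto_tsum_of_dominated_convergence (summable_norm_lp_one a)
      (fun k => (tendsto_spike j₀ _ k).const_mul (a k)) (.of_forall fun m k => ?_)
    rw [norm_mul]
    exact mul_le_of_le_one_right (norm_nonneg _) (hzs m k).le
  · simpa only [B.polydiskEmbedding_of_mem β (hxs _), hcoords] using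
      tendsto_seqEmbedding_spike hε hu hρ hw β j₀

lemma exists_ball_subset_clusterSetDX (hε : 0 < ε) {β : lp (fun _ : ℕ => ℂ) 1} (hβ : β ≠ 0)
    {u : ℕ → ℂ} {ρ : ℝ} (hu : ∀ k, ‖u k‖ ≤ ρ) (hρ : ρ < 1) :
    ∃ (c : ℂ) (r : ℝ), 0 < r ∧ ball c r ⊆ clusterSetDX B (B.polydiskEmbedding ε β) u := by
  obtain ⟨j₀, hj₀⟩ : ∃ j, β j ≠ 0 := by
    by_contra! h
    exact hβ (lp.ext (funext h))
  set A := β j₀ * ((ε / 2 : ℝ) * Complex.exp (-blockSeries u j₀))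
  have hA : A ≠ 0 := mul_ne_zero hj₀ (mul_ne_zero (by simp; linarith) (Complex.exp_ne_zero _))
  refine ⟨seqEmbedding ε β u - A / 2, ‖A‖ / 2, by positivity, fun lam hlam => ?_⟩
  set q := 1 + (lam - seqEmbedding ε β u) / A with hqdef
  have hq : ‖q - 1 / 2‖ < 1 / 2 := by
    have : q - 1 / 2 = (lam - (seqEmbedding ε β u - A / 2)) / A := by
      rw [hqdef]; field_simp; ring
    rw [this, norm_div, div_lt_iff₀ (norm_pos_iff.2 hA), ← dist_eq_norm]
    linarith [mem_ball.1 hlam]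
  have hq0 : q ≠ 0 := fun h => by norm_num [h] at hq
  have hq1 : ‖q‖ < 1 := by
    have := norm_add_le (q - 1 / 2) (1 / 2)
    norm_num at this ⊢
    linarith
  obtain ⟨w, hw, hwq⟩ := exists_re_pos_exp_neg_eq hq0 hq1
  convert B.mem_clusterSetDX_polydiskEmbedding hε.le hu hρ hw β j₀ using 1
  rw [hwq, hqdef, add_sub_cancel_left, mul_div_cancel₀ _ hA, add_sub_cancel]

end SchauderBasisC

theorem stmt11_general {X : Type*} [NormedAddCommGroup X] [NormedSpace ℂ X]
    (B : SchauderBasisC X) (ρ : ℝ) (hρ1 : ρ < 1) (ε : ℝ) (hε : 0 < ε) :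
    ∃ T : lp (fun _ : ℕ => ℂ) 1 → (X → ℂ), IsLinearMap ℂ T ∧
      (∀ β, DifferentiableOn ℂ (T β) (polydisk B (fun _ => 1))) ∧
      (∀ β, (∀ x ∈ polydisk B (fun _ => 1), ‖T β x‖ ≤ (1 + ε) * ‖β‖) ∧
        ‖β‖ ≤ ⨆ x ∈ polydisk B (fun _ => 1), ‖T β x‖) ∧
      (∀ β, β ≠ 0 → ∀ u : ℕ → ℂ, (∀ j, ‖u j‖ ≤ ρ) →
        ∃ (c : ℂ) (r : ℝ), 0 < r ∧ ball c r ⊆ clusterSetDX B (T β) u) :=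
  ⟨B.polydiskEmbedding ε, B.isLinearMap_polydiskEmbedding hε.le,
    B.differentiableOn_polydiskEmbedding hε.le,
    fun β => ⟨fun _ hx => B.norm_polydiskEmbedding_le hε.le β hx,
      B.norm_le_iSup_polydiskEmbedding hε.le β⟩,
    fun _ hβ _ hu => B.exists_ball_subset_clusterSetDX hε hβ hu hρ1⟩

/-- for every `0 < ρ < 1` and `ε > 0` there is a linear map
`T : ℓ₁ → H^∞(𝔻_X)` with `‖β‖₁ ≤ sup_{𝔻_X} |T β| ≤ (1+ε)‖β‖₁` such that for every `β ≠ 0`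
and every `u` with `‖u‖_∞ ≤ ρ`, the cluster set `Cl_{𝔻_X}(T β, u)` contains a disk of
positive radius. -/
theorem stmt11 {X : Type*} [NormedAddCommGroup X] [NormedSpace ℂ X] [CompleteSpace X]
    (B : SchauderBasisC X) (ρ : ℝ) (hρ : 0 < ρ) (hρ1 : ρ < 1) (ε : ℝ) (hε : 0 < ε) :
    ∃ T : lp (fun _ : ℕ => ℂ) 1 → (X → ℂ), IsLinearMap ℂ T ∧
      (∀ β, DifferentiableOn ℂ (T β) (polydisk B (fun _ => 1))) ∧
      (∀ β, (∀ x ∈ polydisk B (fun _ => 1), ‖T β x‖ ≤ (1 + ε) * ‖β‖) ∧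
        ‖β‖ ≤ ⨆ x ∈ polydisk B (fun _ => 1), ‖T β x‖) ∧
      (∀ β, β ≠ 0 → ∀ u : ℕ → ℂ, (∀ j, ‖u j‖ ≤ ρ) →
        ∃ (c : ℂ) (r : ℝ), 0 < r ∧ ball c r ⊆ clusterSetDX B (T β) u) :=
  stmt11_general B ρ hρ1 ε hε
end
end
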